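/- arXiv:1405.3163 — 3 statements merged into one kernel-verified Lean document; each statement's English description precedes it below -/
import Mathlib

section
/- Let g be a finite-dimensional complex semisimple Lie algebra equipped with a bigrading g = ⊕_{p,q ∈ ℤ} g^{p,q} satisfying ⁅g^{p,q}, g^{r,s}⁆ ⊆ g^{p+r, q+s}, and with a real structure σ (a conjugate-linear Lie algebra involution of g) satisfying σ(g^{p,q}) = g^{q,p} for all p, q. Then l = ⊕_p g^{p,p} is a σ-stable Lie subalgebra of g, and there exists an element x ∈ g with ad(x) diagonalizable whose centralizer in g equals l; that is, l is a Levi subalgebra of g defined over ℝ. -/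
/-!
A bigrading `g = ⊕ g^{p,q}` compatible with the bracket makes `D = p - q` on `g^{p,q}` a
derivation of `g`. As the Killing form is nondegenerate, every derivation is inner, so `D = ad E`
for some `E`. Then `ad E` is diagonalizable, the `g^{p,q}` lying in its eigenspaces, and its kernel
is the sum of the `g^{p,q}` with `p - q = 0`, i.e. the diagonal `l`. That `l` is closed under the
bracket and under `σ` is read off from `⁅g^{p,p}, g^{r,r}⁆ ⊆ g^{p+r,p+r}` and `σ(g^{p,p}) = g^{p,p}`.
-/

namespace DirectSum

variable {ι R : Type*} [DecidableEq ι] [CommRing R]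

section Module

variable {M : Type*} [AddCommGroup M] [Module R M] (ℳ : ι → Submodule R M) [Decomposition ℳ]

def gradingEnd (d : ι → R) : Module.End R M :=
  (decomposeLinearEquiv ℳ).symm.toLinearMap ∘ₗ lmap (fun i => d i • LinearMap.id) ∘ₗ
    (decomposeLinearEquiv ℳ).toLinearMap

variable {ℳ}

theorem decompose_gradingEnd_apply (d : ι → R) (y : M) (i : ι) :
    decompose ℳ (gradingEnd ℳ d y) i = d i • decompose ℳ y i := by
  simp [gradingEnd, decomposeLinearEquiv_apply, decomposeLinearEquiv_symm_apply]

theorem gradingEnd_apply_of_mem (d : ι → R) {i : ι} {x : M} (hx : x ∈ ℳ i) :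
    gradingEnd ℳ d x = d i • x := by
  refine (decompose ℳ).injective <| DFinsupp.ext fun j => ?_
  rw [decompose_gradingEnd_apply, decompose_smul, decompose_of_mem ℳ hx, smul_apply]
  rcases eq_or_ne i j with rfl | hij
  · rw [of_eq_same]
  · rw [of_eq_of_ne _ _ _ hij.symm, smul_zero, smul_zero]

theorem iSup_eigenspace_gradingEnd_eq_top (d : ι → R) :
    ⨆ μ, Module.End.eigenspace (gradingEnd ℳ d) μ = ⊤ := by
  rw [eq_top_iff, ← (Decomposition.isInternal ℳ).submodule_iSup_eq_top]
  exact iSup_le fun i x hx => Submodule.mem_iSup_of_mem (d i) <|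
    Module.End.mem_eigenspace_iff.mpr (gradingEnd_apply_of_mem d hx)

theorem mem_iSup_of_decompose_eq_zero {S : ι → Prop} {y : M}
    (hy : ∀ i, ¬ S i → (decompose ℳ y i : M) = 0) : y ∈ ⨆ (i) (_ : S i), ℳ i := by
  classical
  rw [← sum_support_decompose ℳ y]
  refine Submodule.sum_mem _ fun i _ => ?_
  by_cases hi : S i
  · exact Submodule.mem_iSup_of_mem i <| Submodule.mem_iSup_of_mem hi (decompose ℳ y i).2
  · simp [hy i hi]

theorem gradingEnd_eq_zero_iff [IsDomain R] [Module.IsTorsionFree R M] (d : ι → R) (y : M) :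
    gradingEnd ℳ d y = 0 ↔ y ∈ ⨆ (i) (_ : d i = 0), ℳ i := by
  constructor
  · intro hy
    refine mem_iSup_of_decompose_eq_zero fun i hi => ?_
    have hyi := congr_arg (fun z => (decompose ℳ z i : M)) hy
    simp only [decompose_gradingEnd_apply, decompose_zero, zero_apply, Submodule.coe_smul,
      ZeroMemClass.coe_zero] at hyi
    exact (smul_eq_zero.mp hyi).resolve_left hi
  · intro hy
    have hker : ⨆ (i) (_ : d i = 0), ℳ i ≤ LinearMap.ker (gradingEnd ℳ d) :=
      iSup₂_le fun i hi x hx => by simp [gradingEnd_apply_of_mem d hx, hi]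
    exact hker hy

end Module

section Lie

variable [AddMonoid ι] {L : Type*} [LieRing L] [LieAlgebra R L]
  {ℳ : ι → Submodule R L} [Decomposition ℳ]

theorem gradingEnd_lie (d : ι →+ R)
    (hℳ : ∀ i j, ∀ x ∈ ℳ i, ∀ y ∈ ℳ j, ⁅x, y⁆ ∈ ℳ (i + j)) (a b : L) :
    gradingEnd ℳ d ⁅a, b⁆ = ⁅gradingEnd ℳ d a, b⁆ + ⁅a, gradingEnd ℳ d b⁆ := by
  induction a using Decomposition.inductionOn ℳ generalizing b with
  | zero => simp
  | add a a' ha ha' => simp only [add_lie, map_add, ha, ha']; abel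
  | @homogeneous i x =>
    obtain ⟨x, hx⟩ := x
    induction b using Decomposition.inductionOn ℳ with
    | zero => simp
    | add b b' hb hb' => simp only [lie_add, map_add, hb, hb']; abel
    | @homogeneous j y =>
      obtain ⟨y, hy⟩ := y
      rw [gradingEnd_apply_of_mem d (hℳ i j x hx y hy), gradingEnd_apply_of_mem d hx,
        gradingEnd_apply_of_mem d hy, smul_lie, lie_smul, ← add_smul, map_add]

def gradingDerivation (d : ι →+ R) (hℳ : ∀ i j, ∀ x ∈ ℳ i, ∀ y ∈ ℳ j, ⁅x, y⁆ ∈ ℳ (i + j)) :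
    LieDerivation R L L where
  toLinearMap := gradingEnd ℳ d
  leibniz' a b := by rw [gradingEnd_lie d hℳ, ← lie_skew b]; abel

end Lie

end DirectSum

theorem LieAlgebra.isKilling_of_killingForm_nondegenerate {K L : Type*} [Field K] [LieRing L]
    [LieAlgebra K L] (h : (killingForm K L).Nondegenerate) : LieAlgebra.IsKilling K L where
  killingCompl_top_eq_bot := (LieSubmodule.eq_bot_iff _).mpr fun x hx =>
    h.1 x fun y => by simpa [LieModule.traceForm_comm K L L x] using hx y

namespace Submodule

theorem lie_mem_iSup {κ R L : Type*} [Add κ] [CommRing R] [LieRing L] [LieAlgebra R L]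
    {N : κ → Submodule R L} (hN : ∀ i j, ∀ x ∈ N i, ∀ y ∈ N j, ⁅x, y⁆ ∈ N (i + j)) {x y : L}
    (hx : x ∈ ⨆ i, N i) (hy : y ∈ ⨆ i, N i) : ⁅x, y⁆ ∈ ⨆ i, N i := by
  induction hx using iSup_induction' N with
  | zero => simp
  | add x x' _ _ hx hx' => rw [add_lie]; exact add_mem hx hx'
  | mem i x hx =>
    induction hy using iSup_induction' N with
    | zero => simp
    | add y y' _ _ hy hy' => rw [lie_add]; exact add_mem hy hy'
    | mem j y hy => exact mem_iSup_of_mem (i + j) (hN i j x hx y hy)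

theorem map_mem_iSup {ι R R' M M' : Type*} [Semiring R] [Semiring R'] [AddCommMonoid M]
    [AddCommMonoid M'] [Module R M] [Module R' M'] {N : ι → Submodule R M}
    {N' : ι → Submodule R' M'} (f : M →+ M') (hf : ∀ i, ∀ x ∈ N i, f x ∈ N' i) {x : M}
    (hx : x ∈ ⨆ i, N i) : f x ∈ ⨆ i, N' i := by
  induction hx using iSup_induction' N with
  | zero => simp
  | add x x' _ _ hx hx' => rw [map_add]; exact add_mem hx hx'
  | mem i x hx => exact mem_iSup_of_mem i (hf i x hx)

end Submodule

theorem diagonal_of_bigrading_is_real_levi_general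
    (g : Type*) [LieRing g] [LieAlgebra ℂ g] [FiniteDimensional ℂ g]
    (hss : (killingForm ℂ g).Nondegenerate)
    (G : ℤ → ℤ → Submodule ℂ g)
    (hinternal : DirectSum.IsInternal (fun pq : ℤ × ℤ => G pq.1 pq.2))
    (hbracket : ∀ p q r s : ℤ, ∀ x ∈ G p q, ∀ y ∈ G r s, ⁅x, y⁆ ∈ G (p + r) (q + s))
    (σ : g → g)
    (hadd : ∀ x y : g, σ (x + y) = σ x + σ y)
    (hconj : ∀ p q : ℤ, σ '' (G p q : Set g) = (G q p : Set g)) :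
    (∀ x ∈ (⨆ p : ℤ, G p p), ∀ y ∈ (⨆ p : ℤ, G p p), ⁅x, y⁆ ∈ (⨆ p : ℤ, G p p)) ∧
    (∀ x ∈ (⨆ p : ℤ, G p p), σ x ∈ (⨆ p : ℤ, G p p)) ∧
    (∃ E : g,
      (⨆ μ : ℂ, Module.End.eigenspace (LieAlgebra.ad ℂ g E) μ) = ⊤ ∧
      ∀ y : g, ⁅E, y⁆ = 0 ↔ y ∈ (⨆ p : ℤ, G p p)) := by
  have := LieAlgebra.isKilling_of_killingForm_nondegenerate hss
  have := hinternal.chooseDecomposition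
  let d : ℤ × ℤ →+ ℂ := (Int.castAddHom ℂ).comp (AddMonoidHom.fst ℤ ℤ - AddMonoidHom.snd ℤ ℤ)
  obtain ⟨E, hE⟩ := LieDerivation.IsKilling.exists_eq_ad <|
    DirectSum.gradingDerivation d fun i j => hbracket i.1 i.2 j.1 j.2
  have hadE : LieAlgebra.ad ℂ g E = DirectSum.gradingEnd (fun pq : ℤ × ℤ => G pq.1 pq.2) d := by
    ext y; simpa [DirectSum.gradingDerivation] using congr($hE y)
  have hdiag : (⨆ (pq : ℤ × ℤ) (_ : d pq = 0), G pq.1 pq.2) = ⨆ p, G p p := by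
    simp [d, sub_eq_zero, iSup_prod]
  refine ⟨fun x hx y hy => Submodule.lie_mem_iSup (fun p q => hbracket p p q q) hx hy,
    fun x hx => Submodule.map_mem_iSup (AddMonoidHom.mk' σ hadd)
      (fun p x hx => (hconj p p).subset ⟨x, hx, rfl⟩) hx,
    E, hadE ▸ DirectSum.iSup_eigenspace_gradingEnd_eq_top d, fun y => ?_⟩
  rw [← LieAlgebra.ad_apply ℂ, hadE, DirectSum.gradingEnd_eq_zero_iff, hdiag]

/-- **The diagonal of a real bigraded semisimple Lie algebra is a Levi subalgebra over ℝ.**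
Let `g = ⊕_{p,q} g^{p,q}` be a finite-dimensional bigraded complex Lie algebra with
nondegenerate Killing form (semisimple), `⁅g^{p,q}, g^{r,s}⁆ ⊆ g^{p+r,q+s}`, equipped with a
real structure `σ` (a conjugate-linear Lie algebra involution) with `σ(g^{p,q}) = g^{q,p}`.
Then `l = ⊕_p g^{p,p}` is a `σ`-stable Lie subalgebra, and there is an ad-diagonalizable
element of `g` whose centralizer is exactly `l`. -/
theorem diagonal_of_bigrading_is_real_levi
    (g : Type*) [LieRing g] [LieAlgebra ℂ g] [FiniteDimensional ℂ g]
    (hss : (killingForm ℂ g).Nondegenerate)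
    (G : ℤ → ℤ → Submodule ℂ g)
    (hinternal : DirectSum.IsInternal (fun pq : ℤ × ℤ => G pq.1 pq.2))
    (hbracket : ∀ p q r s : ℤ, ∀ x ∈ G p q, ∀ y ∈ G r s, ⁅x, y⁆ ∈ G (p + r) (q + s))
    (σ : g → g)
    (hadd : ∀ x y : g, σ (x + y) = σ x + σ y)
    (hsmul : ∀ (c : ℂ) (x : g), σ (c • x) = (starRingEnd ℂ) c • σ x)
    (hbr : ∀ x y : g, σ ⁅x, y⁆ = ⁅σ x, σ y⁆)
    (hinvol : ∀ x : g, σ (σ x) = x)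
    (hconj : ∀ p q : ℤ, σ '' (G p q : Set g) = (G q p : Set g)) :
    (∀ x ∈ (⨆ p : ℤ, G p p), ∀ y ∈ (⨆ p : ℤ, G p p), ⁅x, y⁆ ∈ (⨆ p : ℤ, G p p)) ∧
    (∀ x ∈ (⨆ p : ℤ, G p p), σ x ∈ (⨆ p : ℤ, G p p)) ∧
    (∃ E : g,
      (⨆ μ : ℂ, Module.End.eigenspace (LieAlgebra.ad ℂ g E) μ) = ⊤ ∧
      ∀ y : g, ⁅E, y⁆ = 0 ↔ y ∈ (⨆ p : ℤ, G p p)) :=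
  diagonal_of_bigrading_is_real_levi_general g hss G hinternal hbracket σ hadd hconj
end

section
/- Let g_R be a finite-dimensional real Lie algebra, θ an involutive Lie algebra automorphism of g_R, and (h, e, f) an sl2-triple in g_R satisfying θ(f) = −e and θ(h) = −h (a Cayley triple; note that θ(e) = −f then follows). In the complexification g_C = g_R ⊗ ℂ, with conjugation σ and with θ_C the complex-linear extension of θ, set Ē = (1/2)·(e + f − i·h), Z = i·(f − e), and E = (1/2)·(e + f + i·h). Then (Z, Ē, E) is an sl2-triple satisfying θ_C(Z) = Z, θ_C(E) = −E, θ_C(Ē) = −Ē, and σ(E) = Ē. -/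
open scoped TensorProduct

/-- A standard (sl₂) triple in a Lie ring: neutral element `h`, nilpositive `e`,
nilnegative `f`, with `⁅h, e⁆ = 2e`, `⁅h, f⁆ = -2f`, `⁅e, f⁆ = h` and `e ≠ 0`. -/
def IsStdTriple {g : Type*} [LieRing g] (h e f : g) : Prop :=
  ⁅h, e⁆ = 2 • e ∧ ⁅h, f⁆ = -(2 • f) ∧ ⁅e, f⁆ = h ∧ e ≠ 0

/-- The conjugation (real structure) on the complexification `ℂ ⊗[ℝ] gR`. -/
noncomputable def conjC (gR : Type*) [AddCommGroup gR] [Module ℝ gR] :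
    (ℂ ⊗[ℝ] gR) →ₗ[ℝ] (ℂ ⊗[ℝ] gR) :=
  TensorProduct.map Complex.conjAe.toLinearMap LinearMap.id

/-! The Cayley transform is a computation inside the span of `h, e, f`.  The bracket
relations follow from those of `(h, e, f)` and `i * i = -1`; `θ_C` acts on that span as
`h ↦ -h`, `e ↦ -f`, `f ↦ -e`, which fixes `f - e` and negates `e + f` and `h`; and `σ`
fixes `1 ⊗ x` while conjugating scalars, so it exchanges `i` and `-i`, hence `E` and `Ē`. -/

theorem IsStdTriple.tmul_one {R A L : Type*} [CommRing R] [CommRing A] [Algebra R A]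
    [FaithfulSMul R A] [LieRing L] [LieAlgebra R L] [Module.Flat R L] {h e f : L}
    (hT : IsStdTriple h e f) :
    IsStdTriple ((1 : A) ⊗ₜ[R] h) ((1 : A) ⊗ₜ[R] e) ((1 : A) ⊗ₜ[R] f) := by
  obtain ⟨hhe, hhf, hef, he⟩ := hT
  have bracket (x y : L) : ⁅(1 : A) ⊗ₜ[R] x, (1 : A) ⊗ₜ[R] y⁆ = (1 : A) ⊗ₜ[R] ⁅x, y⁆ := by
    rw [LieAlgebra.ExtendScalars.bracket_tmul, one_mul]
  refine ⟨?_, ?_, ?_, ?_⟩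
  · rw [bracket, hhe, TensorProduct.tmul_smul]
  · rw [bracket, hhf, TensorProduct.tmul_neg, TensorProduct.tmul_smul]
  · rw [bracket, hef]
  · simpa using (Module.Flat.tensorProduct_mk_injective R L A).ne he

section Cayley

variable {K : Type*} [Field K]

section LinearMap

variable {V : Type*} [AddCommGroup V] [Module K V]

def cayleyZ (i : K) (e f : V) : V := i • (f - e)

def cayleyEbar (i : K) (h e f : V) : V := (2⁻¹ : K) • (e + f - i • h)

def cayleyE (i : K) (h e f : V) : V := (2⁻¹ : K) • (e + f + i • h)

variable (T : V →ₗ[K] V) (i : K) {h e f : V}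

theorem LinearMap.map_cayleyZ_eq_self (he : T e = -f) (hf : T f = -e) :
    T (cayleyZ i e f) = cayleyZ i e f := by
  simp only [cayleyZ, map_smul, map_sub, he, hf]
  module

theorem LinearMap.map_cayleyEbar_eq_neg (hh : T h = -h) (he : T e = -f) (hf : T f = -e) :
    T (cayleyEbar i h e f) = -cayleyEbar i h e f := by
  simp only [cayleyEbar, map_smul, map_add, map_sub, hh, he, hf]
  module

theorem LinearMap.map_cayleyE_eq_neg (hh : T h = -h) (he : T e = -f) (hf : T f = -e) :
    T (cayleyE i h e f) = -cayleyE i h e f := by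
  simp only [cayleyE, map_smul, map_add, hh, he, hf]
  module

end LinearMap

variable {L : Type*} [LieRing L] [LieAlgebra K L] {i : K} {h e f : L}

theorem IsStdTriple.lie_f_e (hT : IsStdTriple h e f) : ⁅f, e⁆ = -h := by rw [← lie_skew, hT.2.2.1]

theorem IsStdTriple.lie_e_h (hT : IsStdTriple h e f) : ⁅e, h⁆ = -(2 • e) := by rw [← lie_skew, hT.1]

theorem IsStdTriple.lie_f_h (hT : IsStdTriple h e f) : ⁅f, h⁆ = 2 • f := by
  rw [← lie_skew, hT.2.1, neg_neg]

theorem IsStdTriple.lie_cayleyZ_cayleyEbar (hT : IsStdTriple h e f) (hi : i * i = -1) :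
    ⁅cayleyZ i e f, cayleyEbar i h e f⁆ = 2 • cayleyEbar i h e f := by
  simp only [cayleyZ, cayleyEbar, lie_smul, smul_lie, lie_add, lie_sub, sub_lie, lie_self,
    hT.lie_f_e, hT.2.2.1, hT.lie_e_h, hT.lie_f_h, ← ofNat_smul_eq_nsmul K]
  linear_combination (norm := module) (-(2⁻¹ * 2 : K)) • hi • (e + f)

theorem IsStdTriple.lie_cayleyZ_cayleyE (hT : IsStdTriple h e f) (hi : i * i = -1) :
    ⁅cayleyZ i e f, cayleyE i h e f⁆ = -(2 • cayleyE i h e f) := by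
  simp only [cayleyZ, cayleyE, lie_smul, smul_lie, lie_add, sub_lie, lie_self,
    hT.lie_f_e, hT.2.2.1, hT.lie_e_h, hT.lie_f_h, ← ofNat_smul_eq_nsmul K]
  linear_combination (norm := module) (2⁻¹ * 2 : K) • hi • (e + f)

theorem IsStdTriple.lie_cayleyEbar_cayleyE (hT : IsStdTriple h e f) (h2 : (2 : K) ≠ 0) :
    ⁅cayleyEbar i h e f, cayleyE i h e f⁆ = cayleyZ i e f := by
  have h2' : (2 : K)⁻¹ * 2 = 1 := inv_mul_cancel₀ h2
  simp only [cayleyZ, cayleyEbar, cayleyE, lie_smul, smul_lie, lie_add, add_lie,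
    sub_lie, lie_self, hT.lie_f_e, hT.2.2.1, hT.lie_e_h, hT.lie_f_h, hT.1, hT.2.1,
    ← ofNat_smul_eq_nsmul K]
  linear_combination (norm := module) (2⁻¹ * 2 + 1 : K) • h2' • (i • (f - e))

theorem IsStdTriple.cayleyEbar_ne_zero (hT : IsStdTriple h e f) (hi : i * i = -1)
    (h2 : (2 : K) ≠ 0) :
    cayleyEbar i h e f ≠ 0 := by
  intro hEbar
  have hZ : cayleyZ i e f = 0 := by
    rw [← hT.lie_cayleyEbar_cayleyE h2, hEbar, zero_lie]
  have hi0 : i ≠ 0 := by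
    rintro rfl
    simp at hi
  have hfe : f = e := by
    simpa [cayleyZ, hi0, sub_eq_zero] using hZ
  have hh : h = 0 := by rw [← hT.2.2.1, hfe, lie_self]
  have h2e : (2 : K) • e = 0 := by
    rw [ofNat_smul_eq_nsmul K, ← hT.1, hh, zero_lie]
  exact hT.2.2.2 ((smul_eq_zero.mp h2e).resolve_left h2)

theorem IsStdTriple.cayley (hT : IsStdTriple h e f) (hi : i * i = -1) (h2 : (2 : K) ≠ 0) :
    IsStdTriple (cayleyZ i e f) (cayleyEbar i h e f) (cayleyE i h e f) :=
  ⟨hT.lie_cayleyZ_cayleyEbar hi, hT.lie_cayleyZ_cayleyE hi, hT.lie_cayleyEbar_cayleyE h2,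
    hT.cayleyEbar_ne_zero hi h2⟩

end Cayley

section Conjugation

variable {gR : Type*} [AddCommGroup gR] [Module ℝ gR]

theorem conjC_tmul (c : ℂ) (x : gR) : conjC gR (c ⊗ₜ[ℝ] x) = (starRingEnd ℂ c) ⊗ₜ[ℝ] x := rfl

theorem conjC_smul (c : ℂ) (v : ℂ ⊗[ℝ] gR) :
    conjC gR (c • v) = starRingEnd ℂ c • conjC gR v := by
  induction v using TensorProduct.induction_on with
  | zero => simp only [smul_zero, map_zero]
  | tmul a x => simp only [TensorProduct.smul_tmul', conjC_tmul, smul_eq_mul, map_mul]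
  | add v w hv hw => simp only [smul_add, map_add, hv, hw]

theorem conjC_cayleyE (h e f : gR) :
    conjC gR (cayleyE Complex.I ((1 : ℂ) ⊗ₜ[ℝ] h) ((1 : ℂ) ⊗ₜ[ℝ] e) ((1 : ℂ) ⊗ₜ[ℝ] f)) =
      cayleyEbar Complex.I ((1 : ℂ) ⊗ₜ[ℝ] h) ((1 : ℂ) ⊗ₜ[ℝ] e) ((1 : ℂ) ⊗ₜ[ℝ] f) := by
  simp only [cayleyE, cayleyEbar, conjC_smul, map_add, conjC_tmul, map_one, map_inv₀,
    map_ofNat, Complex.conj_I, neg_smul, sub_eq_add_neg]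

end Conjugation

theorem cayleyTriple_transform_isDKS_general
    (gR : Type*) [LieRing gR] [LieAlgebra ℝ gR]
    (θ : gR →ₗ⁅ℝ⁆ gR) (hinvol : ∀ x : gR, θ (θ x) = x)
    (h e f : gR) (hT : IsStdTriple h e f)
    (hf : θ f = -e) (hh : θ h = -h) :
    ∀ Z Ebar E : ℂ ⊗[ℝ] gR,
      Z = Complex.I • ((1 : ℂ) ⊗ₜ[ℝ] f - (1 : ℂ) ⊗ₜ[ℝ] e) →
      Ebar = (2⁻¹ : ℂ) •
        ((1 : ℂ) ⊗ₜ[ℝ] e + (1 : ℂ) ⊗ₜ[ℝ] f - Complex.I • ((1 : ℂ) ⊗ₜ[ℝ] h)) →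
      E = (2⁻¹ : ℂ) •
        ((1 : ℂ) ⊗ₜ[ℝ] e + (1 : ℂ) ⊗ₜ[ℝ] f + Complex.I • ((1 : ℂ) ⊗ₜ[ℝ] h)) →
      IsStdTriple Z Ebar E ∧
      LinearMap.baseChange ℂ θ.toLinearMap Z = Z ∧
      LinearMap.baseChange ℂ θ.toLinearMap E = -E ∧
      LinearMap.baseChange ℂ θ.toLinearMap Ebar = -Ebar ∧
      conjC gR E = Ebar := by
  rintro Z Ebar E rfl rfl rfl
  have he : θ e = -f := by rw [← neg_neg e, ← hf, map_neg, hinvol]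
  have hθ {x y : gR} (hxy : θ x = -y) :
      θ.toLinearMap.baseChange ℂ ((1 : ℂ) ⊗ₜ[ℝ] x) = -((1 : ℂ) ⊗ₜ[ℝ] y) := by
    rw [LinearMap.baseChange_tmul, LieHom.coe_toLinearMap, hxy, TensorProduct.tmul_neg]
  exact ⟨(hT.tmul_one (A := ℂ)).cayley Complex.I_mul_I two_ne_zero,
    LinearMap.map_cayleyZ_eq_self _ _ (hθ he) (hθ hf),
    LinearMap.map_cayleyE_eq_neg _ _ (hθ hh) (hθ he) (hθ hf),
    LinearMap.map_cayleyEbar_eq_neg _ _ (hθ hh) (hθ he) (hθ hf),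
    conjC_cayleyE h e f⟩

/-- **The Cayley transform of a Cayley triple is a DKS-triple.**
Let `gR` be a finite-dimensional real Lie algebra, `θ` an involutive Lie algebra
automorphism, and `(h, e, f)` an sl₂-triple with `θ f = -e` and `θ h = -h` (a Cayley
triple).  In the complexification `ℂ ⊗[ℝ] gR`, with conjugation `σ` and `θ_C` the
complex-linear extension of `θ`, the elements `Ē = (1/2)(e + f - i h)`, `Z = i(f - e)`,
`E = (1/2)(e + f + i h)` form an sl₂-triple with `θ_C Z = Z`, `θ_C E = -E`,
`θ_C Ē = -Ē` and `σ E = Ē`. -/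
theorem cayleyTriple_transform_isDKS
    (gR : Type*) [LieRing gR] [LieAlgebra ℝ gR] [FiniteDimensional ℝ gR]
    (θ : gR →ₗ⁅ℝ⁆ gR) (hinvol : ∀ x : gR, θ (θ x) = x)
    (h e f : gR) (hT : IsStdTriple h e f)
    (hf : θ f = -e) (hh : θ h = -h) :
    ∀ Z Ebar E : ℂ ⊗[ℝ] gR,
      Z = Complex.I • ((1 : ℂ) ⊗ₜ[ℝ] f - (1 : ℂ) ⊗ₜ[ℝ] e) →
      Ebar = (2⁻¹ : ℂ) •
        ((1 : ℂ) ⊗ₜ[ℝ] e + (1 : ℂ) ⊗ₜ[ℝ] f - Complex.I • ((1 : ℂ) ⊗ₜ[ℝ] h)) →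
      E = (2⁻¹ : ℂ) •
        ((1 : ℂ) ⊗ₜ[ℝ] e + (1 : ℂ) ⊗ₜ[ℝ] f + Complex.I • ((1 : ℂ) ⊗ₜ[ℝ] h)) →
      IsStdTriple Z Ebar E ∧
      LinearMap.baseChange ℂ θ.toLinearMap Z = Z ∧
      LinearMap.baseChange ℂ θ.toLinearMap E = -E ∧
      LinearMap.baseChange ℂ θ.toLinearMap Ebar = -Ebar ∧
      conjC gR E = Ebar :=
  cayleyTriple_transform_isDKS_general gR θ hinvol h e f hT hf hh
end

section
/- Let V be a finite-dimensional vector space over a field of characteristic zero and N a nilpotent endomorphism of V. Then there is exactly one increasing filtration (W_ℓ)_{ℓ ∈ ℤ} of V by subspaces, with W_ℓ = 0 for ℓ sufficiently small and W_ℓ = V for ℓ sufficiently large, such that (i) W_ℓ ⊆ W_{ℓ+1} for all ℓ, (ii) N(W_ℓ) ⊆ W_{ℓ−2} for all ℓ, and (iii) for every ℓ ≥ 0 the map induced by N^ℓ from Gr_ℓ = W_ℓ/W_{ℓ−1} to Gr_{−ℓ} = W_{−ℓ}/W_{−ℓ−1} is an isomorphism. -/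
/-- `W` is a Jacobson–Morosov (weight) filtration for the nilpotent endomorphism `N`:
an increasing, exhaustive and separated filtration indexed by `ℤ` with `N (W ℓ) ⊆ W (ℓ-2)`,
such that for every `ℓ ≥ 0` the map induced by `N^ℓ` from `Gr_ℓ = W ℓ / W (ℓ-1)` to
`Gr_{-ℓ} = W (-ℓ) / W (-ℓ-1)` is an isomorphism (expressed elementwise: injectivity and
surjectivity of the induced map on the graded pieces). -/
def IsWeightFiltration {K V : Type*} [Field K] [AddCommGroup V] [Module K V]
    (N : Module.End K V) (W : ℤ → Submodule K V) : Prop :=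
  Monotone W ∧
  (∃ a : ℤ, ∀ ℓ : ℤ, ℓ ≤ a → W ℓ = ⊥) ∧
  (∃ b : ℤ, ∀ ℓ : ℤ, b ≤ ℓ → W ℓ = ⊤) ∧
  (∀ ℓ : ℤ, Submodule.map N (W ℓ) ≤ W (ℓ - 2)) ∧
  (∀ ℓ : ℕ,
    (∀ x ∈ W (ℓ : ℤ), (N ^ ℓ) x ∈ W (-(ℓ : ℤ) - 1) → x ∈ W ((ℓ : ℤ) - 1)) ∧
    W (-(ℓ : ℤ)) ≤ Submodule.map (N ^ ℓ) (W (ℓ : ℤ)) ⊔ W (-(ℓ : ℤ) - 1))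

/-!
Uniqueness: condition (iii) together with `N (W ℓ) ⊆ W (ℓ - 2)` says exactly that
`W (ℓ - 1) = W ℓ ∩ (N ^ ℓ)⁻¹ W (-ℓ - 1)` and `W (-ℓ) = N ^ ℓ W ℓ + W (-ℓ - 1)` for `ℓ ≥ 0`, and if
`N ^ (k + 1) = 0` the same two identities force `W ℓ = V` for `ℓ ≥ k` and `W ℓ = 0` for `ℓ < -k`.
Hence `W` is determined outside `[-ℓ, ℓ)` by descending induction on `ℓ`.

Existence: with `X` acting by `N`, `V` is a finite product of Jordan blocks `K[X] ⧸ (X ^ e)`. On a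
block the ideals `(X ^ ⌊(e - ℓ) / 2⌋)` form a weight filtration, and weight filtrations are
compatible with products and with transport along isomorphisms.
-/

theorem LinearMap.piMap_pow {K ι : Type*} [Semiring K] {V : ι → Type*}
    [∀ i, AddCommMonoid (V i)] [∀ i, Module K (V i)] (N : ∀ i, Module.End K (V i)) (n : ℕ) :
    LinearMap.piMap N ^ n = LinearMap.piMap fun i => N i ^ n := by
  induction n with
  | zero => rfl
  | succ n ih => rw [pow_succ, ih]; ext x i; simp [pow_succ]

namespace IsWeightFiltration

section Uniqueness

variable {K V : Type*} [Field K] [AddCommGroup V] [Module K V] {N : Module.End K V}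
  {W W' : ℤ → Submodule K V}

theorem map_pow_le (hW : IsWeightFiltration N W) (n : ℕ) (m : ℤ) :
    (W m).map (N ^ n) ≤ W (m - 2 * n) := by
  induction n generalizing m with
  | zero => rw [pow_zero, Module.End.one_eq_id, Submodule.map_id, Nat.cast_zero, mul_zero, sub_zero]
  | succ n ih =>
    rw [pow_succ, Module.End.mul_eq_comp, Submodule.map_comp]
    refine (Submodule.map_mono (hW.2.2.2.1 m)).trans ((ih (m - 2)).trans_eq ?_)
    push_cast
    ring_nf

theorem pred_eq_inf_comap (hW : IsWeightFiltration N W) (ℓ : ℕ) :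
    W (ℓ - 1) = W ℓ ⊓ (W (-ℓ - 1)).comap (N ^ ℓ) := by
  refine le_antisymm (le_inf (hW.1 (by omega)) ?_) fun x hx => (hW.2.2.2.2 ℓ).1 x hx.1 hx.2
  rw [← Submodule.map_le_iff_le_comap]
  exact (hW.map_pow_le ℓ _).trans_eq (by ring_nf)

theorem neg_eq_map_sup (hW : IsWeightFiltration N W) (ℓ : ℕ) :
    W (-ℓ) = (W ℓ).map (N ^ ℓ) ⊔ W (-ℓ - 1) :=
  le_antisymm (hW.2.2.2.2 ℓ).2 <|
    sup_le ((hW.map_pow_le ℓ ℓ).trans_eq (by ring_nf)) (hW.1 (by omega))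

theorem eq_top_of_pow_eq_zero (hW : IsWeightFiltration N W) {k : ℕ} (hk : N ^ (k + 1) = 0)
    {ℓ : ℤ} (hℓ : k ≤ ℓ) : W ℓ = ⊤ := by
  obtain ⟨b, hb⟩ := hW.2.2.1
  have stable : ∀ j : ℤ, k ≤ j → W j ≤ W k := by
    refine Int.leInduction le_rfl fun j hkj ih => ?_
    obtain ⟨j, rfl⟩ : ∃ j' : ℕ, j = j' := ⟨j.toNat, by omega⟩
    have := hW.pred_eq_inf_comap (j + 1)
    rw [pow_eq_zero_of_le (by omega) hk, Submodule.comap_zero, inf_top_eq, Nat.cast_succ,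
      add_sub_cancel_right] at this
    rwa [← this]
  exact top_le_iff.1 <| (hb _ (le_max_left b k)).symm.le.trans <|
    (stable _ (le_max_right b k)).trans (hW.1 hℓ)

theorem eq_bot_of_pow_eq_zero (hW : IsWeightFiltration N W) {k : ℕ} (hk : N ^ (k + 1) = 0)
    {ℓ : ℤ} (hℓ : ℓ ≤ -k - 1) : W ℓ = ⊥ := by
  obtain ⟨a, ha⟩ := hW.2.1
  have stable : ∀ j : ℤ, j ≤ -k - 1 → W (-k - 1) ≤ W j := by
    refine Int.leInductionDown le_rfl fun j hjk ih => ?_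
    obtain ⟨j, rfl⟩ : ∃ j' : ℕ, j = -j' := ⟨(-j).toNat, by omega⟩
    have := hW.neg_eq_map_sup j
    rw [pow_eq_zero_of_le (by omega) hk, Submodule.map_zero, bot_sup_eq] at this
    rwa [← this]
  exact le_bot_iff.1 <| (hW.1 hℓ).trans <| (stable _ (min_le_right a (-k - 1))).trans
    (ha _ (min_le_left a (-k - 1))).le

theorem eqOn_compl_Ico_of_eqOn_compl_Ico_succ (hW : IsWeightFiltration N W)
    (hW' : IsWeightFiltration N W') {ℓ : ℕ}
    (h : Set.EqOn W W' (Set.Ico (-(ℓ + 1) : ℤ) (ℓ + 1))ᶜ) :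
    Set.EqOn W W' (Set.Ico (-ℓ : ℤ) ℓ)ᶜ := by
  intro m hm
  simp only [Set.mem_compl_iff, Set.mem_Ico, not_and_or, not_le, not_lt] at hm
  have outer : ∀ m : ℤ, ℓ + 1 ≤ m ∨ m < -(ℓ + 1) → W m = W' m := fun m hm =>
    h (by simpa only [Set.mem_compl_iff, Set.mem_Ico, not_and_or, not_le, not_lt, or_comm] using hm)
  by_cases hm' : ℓ + 1 ≤ m ∨ m < -(ℓ + 1)
  · exact outer m hm'
  obtain rfl | rfl : m = ℓ ∨ m = -(ℓ + 1) := by omega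
  · have e := hW.pred_eq_inf_comap (ℓ + 1)
    have e' := hW'.pred_eq_inf_comap (ℓ + 1)
    push_cast at e e'
    rw [add_sub_cancel_right] at e e'
    rw [e, e', outer _ (by omega), outer _ (by omega)]
  · have e := hW.neg_eq_map_sup (ℓ + 1)
    have e' := hW'.neg_eq_map_sup (ℓ + 1)
    push_cast at e e'
    rw [e, e', outer _ (by omega), outer _ (by omega)]

theorem unique (hN : IsNilpotent N) (hW : IsWeightFiltration N W)
    (hW' : IsWeightFiltration N W') : W = W' := by
  obtain ⟨k, hk⟩ := hN
  replace hk : N ^ (k + 1) = 0 := pow_eq_zero_of_le k.le_succ hk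
  have outside : Set.EqOn W W' (Set.Ico (-k : ℤ) k)ᶜ := by
    intro m hm
    simp only [Set.mem_compl_iff, Set.mem_Ico, not_and_or, not_le, not_lt] at hm
    rcases hm with hm | hm
    · rw [hW.eq_bot_of_pow_eq_zero hk (by omega), hW'.eq_bot_of_pow_eq_zero hk (by omega)]
    · rw [hW.eq_top_of_pow_eq_zero hk hm, hW'.eq_top_of_pow_eq_zero hk hm]
  have everywhere :=
    Nat.decreasingInduction (motive := fun ℓ _ => Set.EqOn W W' (Set.Ico (-ℓ : ℤ) ℓ)ᶜ)
      (fun ℓ _ ih => eqOn_compl_Ico_of_eqOn_compl_Ico_succ hW hW' (by exact_mod_cast ih))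
      outside k.zero_le
  exact funext fun m => everywhere (by simp)

end Uniqueness

section Existence

variable {K : Type*} [Field K]

theorem map_linearEquiv {V V' : Type*} [AddCommGroup V] [Module K V] [AddCommGroup V']
    [Module K V'] {N : Module.End K V} {N' : Module.End K V'} {W : ℤ → Submodule K V}
    (hW : IsWeightFiltration N W) (Φ : V ≃ₗ[K] V')
    (hΦ : N' ∘ₗ Φ.toLinearMap = Φ.toLinearMap ∘ₗ N) :
    IsWeightFiltration N' fun ℓ => (W ℓ).map (Φ : V →ₗ[K] V') := by
  obtain ⟨mono, ⟨a, ha⟩, ⟨b, hb⟩, lower, graded⟩ := hW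
  have map_pow (n : ℕ) (p : Submodule K V) :
      (p.map (Φ : V →ₗ[K] V')).map (N' ^ n) = (p.map (N ^ n)).map (Φ : V →ₗ[K] V') := by
    rw [← Submodule.map_comp, ← Submodule.map_comp, Module.End.commute_pow_left_of_commute hΦ]
  refine ⟨fun _ _ h => Submodule.map_mono (mono h),
    ⟨a, fun ℓ h => by simp only [ha ℓ h, Submodule.map_bot]⟩,
    ⟨b, fun ℓ h => by simp only [hb ℓ h, Submodule.map_top, LinearEquiv.range]⟩,
    fun ℓ => ?_, fun ℓ => ⟨?_, ?_⟩⟩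
  · simpa only [pow_one] using (map_pow 1 (W ℓ)).trans_le (Submodule.map_mono (lower ℓ))
  · rintro _ ⟨x, hx, rfl⟩ h
    rw [Submodule.mem_map_equiv] at h ⊢
    rw [← LinearMap.comp_apply, Module.End.commute_pow_left_of_commute hΦ, LinearMap.comp_apply,
      LinearEquiv.coe_coe, Φ.symm_apply_apply] at h
    simpa using (graded ℓ).1 x hx h
  · rw [map_pow, ← Submodule.map_sup]
    exact Submodule.map_mono (graded ℓ).2

theorem pi {ι : Type*} [Finite ι] {V : ι → Type*} [∀ i, AddCommGroup (V i)]
    [∀ i, Module K (V i)]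
    {N : ∀ i, Module.End K (V i)} {W : ∀ i, ℤ → Submodule K (V i)}
    (hW : ∀ i, IsWeightFiltration (N i) (W i)) :
    IsWeightFiltration (LinearMap.piMap N) fun ℓ => Submodule.pi Set.univ fun i => W i ℓ := by
  choose a ha using fun i => (hW i).2.1
  choose b hb using fun i => (hW i).2.2.1
  obtain ⟨A, hA⟩ := (Set.finite_range a).bddBelow
  obtain ⟨B, hB⟩ := (Set.finite_range b).bddAbove
  refine ⟨fun _ _ h => Submodule.pi_mono fun i _ => (hW i).1 h, ⟨A, fun ℓ h => ?_⟩,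
    ⟨B, fun ℓ h => ?_⟩, fun ℓ => ?_, fun ℓ => ⟨fun x hx h => ?_, fun x hx => ?_⟩⟩
  · simp only [ha _ ℓ (h.trans (hA ⟨_, rfl⟩)), Submodule.pi_univ_bot]
  · simp only [hb _ ℓ ((hB ⟨_, rfl⟩).trans h), Submodule.pi_top]
  · rintro _ ⟨x, hx, rfl⟩
    simp only [SetLike.mem_coe, Submodule.mem_pi, Set.mem_univ, forall_const] at hx ⊢
    exact fun i => (hW i).2.2.2.1 ℓ ⟨x i, hx i, rfl⟩
  · simp only [Submodule.mem_pi, Set.mem_univ, forall_const, LinearMap.piMap_pow,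
      LinearMap.coe_piMap, Pi.map_apply] at hx h ⊢
    exact fun i => ((hW i).2.2.2.2 ℓ).1 _ (hx i) (h i)
  · simp only [Submodule.mem_pi, Set.mem_univ, forall_const] at hx
    choose y hy z hz hyz using fun i => Submodule.mem_sup.1 (((hW i).2.2.2.2 ℓ).2 (hx i))
    choose u hu huy using hy
    refine Submodule.mem_sup.2 ⟨_, ⟨u, ?_, rfl⟩, z, ?_, funext fun i => ?_⟩
    · simpa only [SetLike.mem_coe, Submodule.mem_pi, Set.mem_univ, forall_const] using hu
    · simpa only [Submodule.mem_pi, Set.mem_univ, forall_const] using hz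
    · simpa only [Pi.add_apply, LinearMap.piMap_pow, LinearMap.coe_piMap, Pi.map_apply, huy]
        using hyz i

end Existence

end IsWeightFiltration

/-- In a Jordan block of size `e` with cyclic vector `v`, the vector `N ^ i v` has weight
`e - 1 - 2 i`; so `W ℓ` is spanned by the `N ^ i v` with `i ≥ ⌈(e - 1 - ℓ) / 2⌉ = ⌊(e - ℓ) / 2⌋`. -/
def jordanExponent (e : ℕ) (ℓ : ℤ) : ℕ := (min (e : ℤ) ((e - ℓ) / 2)).toNat

section JordanBlock

variable {A : Type*} [CommRing A] {x : A} {e : ℕ}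

theorem pow_succ_dvd_of_pow_dvd_pow_mul (hann : ∀ m ≤ e, ∀ y : A, x ^ m * y = 0 → x ^ (e - m) ∣ y)
    {t ℓ : ℕ} (hlt : ℓ + t < e) {y : A} (hy : x ^ t ∣ y) (h : x ^ (ℓ + t + 1) ∣ x ^ ℓ * y) :
    x ^ (t + 1) ∣ y := by
  obtain ⟨u, rfl⟩ := hy
  obtain ⟨c, hc⟩ := h
  have hker : x ^ (ℓ + t) * (u - x * c) = 0 := by linear_combination hc
  obtain ⟨d, hd⟩ := (dvd_pow_self x (by omega)).trans (hann _ hlt.le _ hker)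
  exact ⟨c + d, by linear_combination x ^ t * hd⟩

theorem isWeightFiltration_mulLeft (K : Type*) [Field K] [Algebra K A] (hx : x ^ e = 0)
    (hann : ∀ m ≤ e, ∀ y : A, x ^ m * y = 0 → x ^ (e - m) ∣ y) :
    IsWeightFiltration (LinearMap.mulLeft K x)
      fun ℓ => (Ideal.span {x ^ jordanExponent e ℓ}).restrictScalars K := by
  have mem (ℓ : ℤ) (y : A) :
      y ∈ (Ideal.span {x ^ jordanExponent e ℓ}).restrictScalars K ↔ x ^ jordanExponent e ℓ ∣ y := by
    rw [Submodule.restrictScalars_mem, Ideal.mem_span_singleton]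
  refine ⟨fun ℓ ℓ' h y => ?_, ⟨-e, fun ℓ h => ?_⟩, ⟨e, fun ℓ h => ?_⟩, fun ℓ => ?_,
    fun ℓ => ⟨fun y hy h => ?_, fun y hy => ?_⟩⟩
  · simp only [mem]
    exact (pow_dvd_pow x (by unfold jordanExponent; omega)).trans
  · have : jordanExponent e ℓ = e := by unfold jordanExponent; omega
    simp only [this, hx, Ideal.span_singleton_eq_bot.2, Submodule.restrictScalars_bot]
  · have : jordanExponent e ℓ = 0 := by unfold jordanExponent; omega
    simp only [this, pow_zero, Ideal.span_singleton_one, Submodule.restrictScalars_top]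
  · rintro _ ⟨y, hy, rfl⟩
    rw [SetLike.mem_coe, mem] at hy
    rw [mem, LinearMap.mulLeft_apply]
    refine (pow_dvd_pow x (?_ : _ ≤ jordanExponent e ℓ + 1)).trans ?_
    · unfold jordanExponent; omega
    · rw [pow_succ']
      exact mul_dvd_mul_left x hy
  · rw [mem] at hy h ⊢
    rw [LinearMap.pow_mulLeft, LinearMap.mulLeft_apply] at h
    by_cases hle : jordanExponent e (ℓ - 1) ≤ jordanExponent e ℓ
    · exact (pow_dvd_pow x hle).trans hy
    have key : jordanExponent e (ℓ - 1) = jordanExponent e ℓ + 1 ∧ ℓ + jordanExponent e ℓ < e ∧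
        jordanExponent e (-ℓ - 1) = ℓ + jordanExponent e ℓ + 1 := by
      unfold jordanExponent at *; omega
    rw [key.2.2] at h
    rw [key.1]
    exact pow_succ_dvd_of_pow_dvd_pow_mul hann key.2.1 hy h
  · rw [mem] at hy
    by_cases hle : jordanExponent e (-ℓ - 1) ≤ jordanExponent e (-ℓ)
    · exact Submodule.mem_sup_right ((mem _ _).2 ((pow_dvd_pow x hle).trans hy))
    have key : ℓ + jordanExponent e ℓ = jordanExponent e (-ℓ) := by
      unfold jordanExponent at *; omega
    obtain ⟨u, rfl⟩ := hy
    refine Submodule.mem_sup_left ⟨x ^ jordanExponent e ℓ * u, (mem _ _).2 (dvd_mul_right _ _), ?_⟩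
    rw [LinearMap.pow_mulLeft, LinearMap.mulLeft_apply, ← key, pow_add, mul_assoc]

end JordanBlock

open Polynomial

section TruncatedPolynomial

variable {R : Type*} [CommRing R]

theorem mk_X_pow_self (e : ℕ) : Ideal.Quotient.mk (Ideal.span {X ^ e}) (X : R[X]) ^ e = 0 := by
  rw [← map_pow, Ideal.Quotient.eq_zero_iff_mem]
  exact Ideal.mem_span_singleton_self _

theorem mk_X_pow_sub_dvd_of_mk_X_pow_mul_eq_zero [IsDomain R] {e m : ℕ} (hm : m ≤ e)
    {y : R[X] ⧸ Ideal.span {(X : R[X]) ^ e}} (h : Ideal.Quotient.mk _ X ^ m * y = 0) :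
    Ideal.Quotient.mk _ X ^ (e - m) ∣ y := by
  obtain ⟨g, rfl⟩ := Ideal.Quotient.mk_surjective y
  rw [← map_pow, ← map_mul, Ideal.Quotient.eq_zero_iff_mem, Ideal.mem_span_singleton,
    ← Nat.add_sub_cancel' hm, pow_add, mul_dvd_mul_iff_left (pow_ne_zero _ X_ne_zero)] at h
  rw [← map_pow]
  exact map_dvd _ h

end TruncatedPolynomial

theorem exists_isWeightFiltration {K V : Type*} [Field K] [AddCommGroup V] [Module K V]
    [FiniteDimensional K V] {N : Module.End K V} (hN : IsNilpotent N) :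
    ∃ W, IsWeightFiltration N W := by
  obtain ⟨n, hn⟩ := hN
  obtain ⟨ι, _, p, -, e, ⟨Ψ⟩⟩ :=
    Module.equiv_directSum_of_isTorsion (Module.AEval.isTorsion_of_finiteDimensional K V N)
  let Ψ' := Ψ ≪≫ₗ DirectSum.linearEquivFunOnFintype _ _ _
  have hX : X ^ n ∈ Module.annihilator K[X] (Module.AEval' N) :=
    Module.mem_annihilator.2 fun m => by
      obtain ⟨v, rfl⟩ := (Module.AEval'.of N).surjective m
      rw [Module.AEval'.X_pow_smul_of, hn, zero_smul, map_zero]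
  rw [Ψ'.annihilator_eq, Module.annihilator_pi, Submodule.mem_iInf] at hX
  have hd (i : ι) : ∃ d, Associated (p i ^ e i) (X ^ d) := by
    have hXi := hX i
    rw [Ideal.annihilator_quotient] at hXi
    obtain ⟨d, -, hd⟩ := (dvd_prime_pow prime_X n).1 (Ideal.mem_span_singleton.1 hXi)
    exact ⟨d, hd⟩
  choose d hd using hd
  let Θ : Module.AEval' N ≃ₗ[K[X]] ∀ i, K[X] ⧸ Ideal.span {(X : K[X]) ^ d i} :=
    Ψ' ≪≫ₗ LinearEquiv.piCongrRight fun i =>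
      Submodule.quotEquivOfEq _ _ (Ideal.span_singleton_eq_span_singleton.2 (hd i))
  let Φ : (∀ i, K[X] ⧸ Ideal.span {(X : K[X]) ^ d i}) ≃ₗ[K] V :=
    (Θ.restrictScalars K).symm ≪≫ₗ (Module.AEval'.of N).symm
  have hΦ : N ∘ₗ Φ.toLinearMap =
      Φ.toLinearMap ∘ₗ LinearMap.piMap fun i => LinearMap.mulLeft K (Ideal.Quotient.mk _ X) := by
    refine LinearMap.ext fun y => ?_
    have hXy : (X : K[X]) • y =
        LinearMap.piMap (fun i => LinearMap.mulLeft K (Ideal.Quotient.mk _ X)) y :=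
      funext fun i => Algebra.smul_def (X : K[X]) (y i)
    simp only [LinearMap.comp_apply, LinearEquiv.coe_coe, Φ, LinearEquiv.trans_apply, ← hXy]
    rw [← Module.AEval'.of_symm_X_smul]
    exact congrArg _ (map_smul Θ.symm X y).symm
  exact ⟨_, (IsWeightFiltration.pi fun i => isWeightFiltration_mulLeft K (mk_X_pow_self _)
    fun m hm y => mk_X_pow_sub_dvd_of_mk_X_pow_mul_eq_zero hm).map_linearEquiv Φ hΦ⟩

theorem existsUnique_weightFiltration_general
    (K : Type*) [Field K]
    (V : Type*) [AddCommGroup V] [Module K V] [FiniteDimensional K V]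
    (N : Module.End K V) (hN : IsNilpotent N) :
    ∃! W : ℤ → Submodule K V, IsWeightFiltration N W := by
  obtain ⟨W, hW⟩ := exists_isWeightFiltration hN
  exact ⟨W, hW, fun W' hW' => hW'.unique hN hW⟩

/-- **Existence and uniqueness of the Jacobson–Morosov weight filtration.**
For a nilpotent endomorphism `N` of a finite-dimensional vector space over a field of
characteristic zero, there is exactly one weight filtration for `N`. -/
theorem existsUnique_weightFiltration
    (K : Type*) [Field K] [CharZero K]
    (V : Type*) [AddCommGroup V] [Module K V] [FiniteDimensional K V]
    (N : Module.End K V) (hN : IsNilpotent N) :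
    ∃! W : ℤ → Submodule K V, IsWeightFiltration N W :=
  existsUnique_weightFiltration_general K V N hN
end
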